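/- arXiv:1202.0862 — 2 statements merged into one kernel-verified Lean document; each statement's English description precedes it below -/
import Mathlib

section
/- Let T : ℕ → ℕ be defined by T(0) = 1 and T(n) = 11 + 10·n·T(n-1) for n ≥ 1 (the number of nodes in the e-Valuate game tree on an expression with n variables). Then for every n ≥ 0, as rational numbers, T(n) = n!·10^n · ( (∑_{i=0}^{n} 1/(i!·10^i)) + (∑_{i=1}^{n} 1/(i!·10^{i-1})) ). -/
/-!
Dividing the recurrence `T (n + 1) = c + b (n + 1) T n` by `(n + 1)! b ^ (n + 1)` makes
`T n / (n! b ^ n)` telescope: each step adds `c / ((n + 1)! b ^ (n + 1))`. With `c = 11`, `b = 10`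
the two sums of the statement combine to `1 + 11 ∑_{i=1}^n 1 / (i! 10 ^ i)`.
-/

open Finset Nat

theorem eq_factorial_mul_pow_mul_sum_of_recurrence {K : Type*} [Field K] [CharZero K]
    {f : ℕ → K} {b c : K} (hb : b ≠ 0)
    (hf : ∀ n : ℕ, f (n + 1) = c + b * (n + 1) * f n) (n : ℕ) :
    f n = n ! * b ^ n * (f 0 + c * ∑ i ∈ Icc 1 n, 1 / (i ! * b ^ i)) := by
  induction n with
  | zero => simp
  | succ n ih =>
    rw [hf, ih, sum_Icc_succ_top (Nat.le_add_left 1 n), Nat.factorial_succ]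
    have : (n ! : K) ≠ 0 := by exact_mod_cast n.factorial_ne_zero
    push_cast
    field_simp
    ring

theorem sum_range_add_sum_Icc_pow_pred_eq (n : ℕ) :
    ∑ i ∈ range (n + 1), 1 / ((i ! : ℚ) * 10 ^ i) + ∑ i ∈ Icc 1 n, 1 / ((i ! : ℚ) * 10 ^ (i - 1))
      = 1 + 11 * ∑ i ∈ Icc 1 n, 1 / ((i ! : ℚ) * 10 ^ i) := by
  have hpred : ∀ i ∈ Icc 1 n, 1 / ((i ! : ℚ) * 10 ^ (i - 1)) = 10 * (1 / (i ! * 10 ^ i)) := by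
    intro i hi
    obtain ⟨j, rfl⟩ := Nat.exists_eq_add_of_le' (mem_Icc.1 hi).1
    rw [Nat.add_sub_cancel, pow_succ]
    field_simp
  rw [range_eq_Ico, sum_eq_sum_Ico_succ_bot (by omega : 0 < n + 1), zero_add,
    Ico_add_one_right_eq_Icc, sum_congr rfl hpred, ← mul_sum]
  simp only [Nat.factorial_zero, Nat.cast_one, pow_zero, mul_one, div_one]
  ring

theorem stmt0 (T : ℕ → ℕ) (hT0 : T 0 = 1)
    (hT : ∀ n : ℕ, 1 ≤ n → T n = 11 + 10 * n * T (n - 1)) :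
    ∀ n : ℕ, (T n : ℚ) =
      (Nat.factorial n : ℚ) * 10 ^ n *
        ((∑ i ∈ Finset.range (n + 1), 1 / ((Nat.factorial i : ℚ) * 10 ^ i)) +
         (∑ i ∈ Finset.Icc 1 n, 1 / ((Nat.factorial i : ℚ) * 10 ^ (i - 1)))) := by
  have hsucc : ∀ n : ℕ, (T (n + 1) : ℚ) = 11 + 10 * (n + 1) * T n := fun n => by
    rw [hT (n + 1) (Nat.le_add_left 1 n)]
    push_cast
    ring
  intro n
  refine (eq_factorial_mul_pow_mul_sum_of_recurrence (f := fun k => (T k : ℚ)) (by norm_num)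
    hsucc n).trans ?_
  rw [sum_range_add_sum_Icc_pow_pred_eq, hT0, Nat.cast_one]
end

section
/- Let T : ℕ → ℕ be defined by T(0) = 1 and T(n) = 11 + 10·n·T(n-1) for n ≥ 1. Then for every n ≥ 0, as real numbers, T(n) ≤ 2·e^{1/10}·n!·10^n. -/
/-!
Dividing the recursion by `n! 10^n` turns it into a telescoping sum: `T n / (n! 10^n)` equals
`1 + 11 ∑_{k=1}^n (1/10)^k / k!`, a partial sum of `11 e^{1/10} - 10`. The claim then reduces to
`9 e^{1/10} ≤ 10`, which is `e^x ≤ 1 / (1 - x)` at `x = 1/10`.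
-/

open Finset Nat

theorem eq_factorial_mul_pow_mul_of_recursion {K : Type*} [Field K] [CharZero K]
    {T : ℕ → K} {a b : K} (hb : b ≠ 0) (hT : ∀ n, T (n + 1) = a + b * (n + 1) * T n) (n : ℕ) :
    T n = n ! * b ^ n * (T 0 - a + a * ∑ k ∈ range (n + 1), b⁻¹ ^ k / k !) := by
  induction n with
  | zero => simp
  | succ n ih =>
    have hlast : ((n + 1)! : K) * b ^ (n + 1) * (b⁻¹ ^ (n + 1) / (n + 1)!) = 1 := by
      rw [inv_pow, mul_div_assoc', mul_assoc, mul_inv_cancel₀ (pow_ne_zero _ hb), mul_one,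
        div_self (Nat.cast_ne_zero.mpr (n + 1).factorial_ne_zero)]
    have hfac : ((n + 1)! : K) = (n + 1) * n ! := by push_cast [Nat.factorial_succ]; ring
    rw [hT, ih, sum_range_succ _ (n + 1)]
    linear_combination (-a) * hlast
      - b ^ (n + 1) * (T 0 - a + a * ∑ k ∈ range (n + 1), b⁻¹ ^ k / k !) * hfac

theorem le_factorial_mul_pow_mul_exp_of_recursion {T : ℕ → ℝ} {a b : ℝ} (ha : 0 ≤ a) (hb : 0 < b)
    (hT : ∀ n, T (n + 1) = a + b * (n + 1) * T n) (n : ℕ) :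
    T n ≤ n ! * b ^ n * (T 0 - a + a * Real.exp b⁻¹) := by
  rw [eq_factorial_mul_pow_mul_of_recursion hb.ne' hT n]
  have hsum := Real.sum_le_exp_of_nonneg (inv_nonneg.mpr hb.le) (n + 1)
  gcongr

theorem stmt2 (T : ℕ → ℕ) (hT0 : T 0 = 1)
    (hT : ∀ n : ℕ, 1 ≤ n → T n = 11 + 10 * n * T (n - 1)) :
    ∀ n : ℕ, (T n : ℝ) ≤ 2 * Real.exp (1 / 10) * (Nat.factorial n : ℝ) * 10 ^ n := by
  intro n
  have hrec : ∀ m, (T (m + 1) : ℝ) = 11 + 10 * (m + 1) * T m := fun m => by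
    rw [hT (m + 1) m.succ_pos, Nat.add_sub_cancel]
    push_cast
    ring
  have hbound := le_factorial_mul_pow_mul_exp_of_recursion (T := fun m => (T m : ℝ))
    (a := 11) (b := 10) (by norm_num) (by norm_num) hrec n
  have hexp : Real.exp (1 / 10) ≤ 10 / 9 := by
    convert Real.exp_bound_div_one_sub_of_interval (x := 1 / 10) (by norm_num) (by norm_num) using 1
    norm_num
  have hscale : (0 : ℝ) ≤ n ! * 10 ^ n := by positivity
  calc (T n : ℝ) ≤ n ! * 10 ^ n * (1 - 11 + 11 * Real.exp (1 / 10)) := by simpa [hT0] using hbound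
    _ ≤ 2 * Real.exp (1 / 10) * n ! * 10 ^ n := by nlinarith
end
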